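/- arXiv:2311.11942 — 3 statements merged into one kernel-verified Lean document; each statement's English description precedes it below -/
import Mathlib

section
/- Let m, n ≥ 1 be integers and let I₁ ≠ I₂ be two admissible subsets of {1, …, m+n}. Then there exists θ > 0 such that for every s ∈ A⁺_{I₁} and every t ∈ A⁺_{I₂}, at least one of the following holds: (a) there exist i ∈ I₁ ∩ {1, …, m} and j ∈ I₁ ∩ {m+1, …, m+n} such that (s_i + s_j) − (t_i + t_j) ≥ θ · min(⌊s⌋_{I₁}, ⌊t⌋_{I₂}); or (b) there exist i ∈ I₂ ∩ {1, …, m} and j ∈ I₂ ∩ {m+1, …, m+n} such that (t_i + t_j) − (s_i + s_j) ≥ θ · min(⌊s⌋_{I₁}, ⌊t⌋_{I₂}). -/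
/-!
Suppose both alternatives fail for `θ = 1 / (N + 1)`, `N = m + n`, and let `μ` be the minimum of
the two floors. Pick `k ∈ I₁ \ I₂`, say on the left, so that `t k = 0` and `s k ≥ μ`, and let `S`, `T`
be the common left/right totals of `s` and `t`. With `b = |I₁ ∩ right|`, `c = |I₂ ∩ left|`,
`d = |I₂ ∩ right|`, averaging the failure of (a) over the pairs `(k, j)` gives
`b μ + (S - T) < b θ μ`, and averaging the failure of (b) over all pairs of `I₂` gives
`(c + d) (T - S) < c d θ μ`. Weighting the first inequality by `c + d` and adding cancels `S - T`,
leaving `(c + d) b μ < ((c + d) b + c d) θ μ`, which is impossible since `c d ≤ N (c + d) b`.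
-/

open Finset

variable {ι : Type*}

lemma card_mul_add_sum_lt {s : Finset ι} (hs : s.Nonempty) {x ε : ℝ} {f : ι → ℝ}
    (h : ∀ j ∈ s, x + f j < ε) : #s * x + ∑ j ∈ s, f j < #s * ε := by
  simpa [sum_add_distrib] using sum_lt_sum_of_nonempty hs h

lemma card_mul_sum_add_card_mul_sum_lt {s t : Finset ι} (hs : s.Nonempty) (ht : t.Nonempty)
    {ε : ℝ} {f : ι → ℝ} (h : ∀ i ∈ s, ∀ j ∈ t, f i + f j < ε) :
    #t * ∑ i ∈ s, f i + #s * ∑ j ∈ t, f j < #s * #t * ε := by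
  have row : ∀ i ∈ s, ∑ j ∈ t, f j + #t * f i < #t * ε := fun i hi => by
    linarith [card_mul_add_sum_lt ht (h i hi)]
  have := card_mul_add_sum_lt hs row
  rw [← mul_sum] at this
  linarith

section Weights

variable (pL pR : ι → Prop)

def Admissible (I : Finset ι) : Prop :=
  (∃ i ∈ I, pL i) ∧ ∃ j ∈ I, pR j

variable {pL pR} in
lemma Admissible.symm {I : Finset ι} (hI : Admissible pL pR I) : Admissible pR pL I :=
  And.symm hI

variable [Fintype ι] [DecidablePred pL] [DecidablePred pR]

/-- `A⁺_I`, the left and right blocks of coordinates being those satisfying `pL` and `pR`. -/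
def MemAPlus (I : Finset ι) (s : ι → ℝ) : Prop :=
  (∀ i, 0 ≤ s i) ∧ ∑ i ∈ univ.filter pL, s i = ∑ i ∈ univ.filter pR, s i ∧ ∀ i, i ∉ I → s i = 0

variable {pL pR}

lemma MemAPlus.sum_filter_eq {I : Finset ι} {s : ι → ℝ} (hs : MemAPlus pL pR I s)
    (p : ι → Prop) [DecidablePred p] : ∑ i ∈ I.filter p, s i = ∑ i ∈ univ.filter p, s i :=
  sum_subset (filter_subset_filter p (subset_univ I)) fun i hi hiI =>
    hs.2.2 i fun hI => hiI (mem_filter.2 ⟨hI, (mem_filter.1 hi).2⟩)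

lemma MemAPlus.sum_filter_le {I : Finset ι} {s : ι → ℝ} (hs : MemAPlus pL pR I s)
    (J : Finset ι) (p : ι → Prop) [DecidablePred p] :
    ∑ i ∈ J.filter p, s i ≤ ∑ i ∈ univ.filter p, s i :=
  sum_le_sum_of_subset_of_nonneg (filter_subset_filter p (subset_univ J)) fun i _ _ => hs.1 i

lemma MemAPlus.symm {I : Finset ι} {s : ι → ℝ} (hs : MemAPlus pL pR I s) :
    MemAPlus pR pL I s :=
  ⟨hs.1, hs.2.1.symm, hs.2.2⟩

lemma false_of_card_bounds {N b c d x ε Δ : ℝ} (hb : 1 ≤ b) (hc : 0 ≤ c) (hd : 1 ≤ d)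
    (hcN : c ≤ N) (hε : 0 ≤ ε) (hx : (N + 1) * ε ≤ x)
    (hrow : b * x + Δ < b * ε) (hpairs : -((c + d) * Δ) < c * d * ε) : False := by
  have hcd : c * d ≤ N * ((c + d) * b) :=
    calc c * d ≤ N * d := by gcongr
      _ ≤ N * ((c + d) * b) := by gcongr <;> nlinarith
  nlinarith [mul_lt_mul_of_pos_left hrow (by linarith : 0 < c + d), mul_le_mul_of_nonneg_right hcd hε,
    mul_le_mul_of_nonneg_left hx (by positivity : 0 ≤ (c + d) * b)]

lemma false_of_forall_mixing_lt_of_left {I J : Finset ι} {s t : ι → ℝ}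
    (hs : MemAPlus pL pR I s) (ht : MemAPlus pL pR J t)
    (hI : Admissible pL pR I) (hJ : Admissible pL pR J)
    {k : ι} (hkI : k ∈ I) (hkL : pL k) (hkJ : k ∉ J) {ε : ℝ} (hε : 0 ≤ ε)
    (hεk : (Fintype.card ι + 1) * ε ≤ s k)
    (hIε : ∀ i ∈ I, ∀ j ∈ I, pL i → pR j → s i + s j - (t i + t j) < ε)
    (hJε : ∀ i ∈ J, ∀ j ∈ J, pL i → pR j → t i + t j - (s i + s j) < ε) : False := by
  set B := I.filter pR
  set C := J.filter pL
  set D := J.filter pR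
  set S := ∑ i ∈ univ.filter pL, s i
  set T := ∑ i ∈ univ.filter pL, t i
  have hB : B.Nonempty := filter_nonempty_iff.2 hI.2
  have hC : C.Nonempty := filter_nonempty_iff.2 hJ.1
  have hD : D.Nonempty := filter_nonempty_iff.2 hJ.2
  have hrow : #B * s k + (S - T) < #B * ε := by
    have hsB : ∑ j ∈ B, s j = S := (hs.sum_filter_eq pR).trans hs.2.1.symm
    have htB : ∑ j ∈ B, t j ≤ T := (ht.sum_filter_le I pR).trans_eq ht.2.1.symm
    have hsum := card_mul_add_sum_lt (x := s k) (ε := ε) (f := fun j => s j - t j) hB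
      fun j hj => by
        linarith [hIε k hkI j (mem_filter.1 hj).1 hkL (mem_filter.1 hj).2, ht.2.2 k hkJ]
    rw [sum_sub_distrib] at hsum
    linarith
  have hpairs : -((#C + #D) * (S - T)) < #C * #D * ε := by
    have htC : ∑ i ∈ C, t i = T := ht.sum_filter_eq pL
    have htD : ∑ j ∈ D, t j = T := (ht.sum_filter_eq pR).trans ht.2.1.symm
    have hsC : ∑ i ∈ C, s i ≤ S := hs.sum_filter_le J pL
    have hsD : ∑ j ∈ D, s j ≤ S := (hs.sum_filter_le J pR).trans_eq hs.2.1.symm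
    have hsum := card_mul_sum_add_card_mul_sum_lt (ε := ε) (f := fun i => t i - s i) hC hD
      fun i hi j hj => by
        linarith [hJε i (mem_filter.1 hi).1 j (mem_filter.1 hj).1 (mem_filter.1 hi).2
          (mem_filter.1 hj).2]
    rw [sum_sub_distrib, sum_sub_distrib, htC, htD] at hsum
    linarith [mul_le_mul_of_nonneg_left hsC (Nat.cast_nonneg (α := ℝ) #D),
      mul_le_mul_of_nonneg_left hsD (Nat.cast_nonneg (α := ℝ) #C)]
  exact false_of_card_bounds (by exact_mod_cast hB.card_pos) (by positivity)
    (by exact_mod_cast hD.card_pos) (by exact_mod_cast card_le_univ C) hε hεk hrow hpairs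

theorem false_of_forall_mixing_lt {I J : Finset ι} {s t : ι → ℝ}
    (hs : MemAPlus pL pR I s) (ht : MemAPlus pL pR J t)
    (hI : Admissible pL pR I) (hJ : Admissible pL pR J) (hLR : ∀ i, pL i ∨ pR i)
    {k : ι} (hkI : k ∈ I) (hkJ : k ∉ J) {ε : ℝ} (hε : 0 ≤ ε)
    (hεk : (Fintype.card ι + 1) * ε ≤ s k)
    (hIε : ∀ i ∈ I, ∀ j ∈ I, pL i → pR j → s i + s j - (t i + t j) < ε)
    (hJε : ∀ i ∈ J, ∀ j ∈ J, pL i → pR j → t i + t j - (s i + s j) < ε) : False := by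
  rcases hLR k with hkL | hkR
  · exact false_of_forall_mixing_lt_of_left hs ht hI hJ hkI hkL hkJ hε hεk hIε hJε
  · refine false_of_forall_mixing_lt_of_left hs.symm ht.symm hI.symm hJ.symm hkI hkR hkJ hε hεk
      (fun i hi j hj hiR hjL => ?_) (fun i hi j hj hiR hjL => ?_)
    · linarith [hIε j hj i hi hjL hiR]
    · linarith [hJε j hj i hi hjL hiR]

end Weights

theorem weights_proposition_general (m n : ℕ)
    (I₁ I₂ : Finset (Fin (m + n)))
    (h₁ : (∃ i ∈ I₁, (i : ℕ) < m) ∧ (∃ j ∈ I₁, m ≤ (j : ℕ)))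
    (h₂ : (∃ i ∈ I₂, (i : ℕ) < m) ∧ (∃ j ∈ I₂, m ≤ (j : ℕ)))
    (hne : I₁ ≠ I₂) :
    ∃ θ : ℝ, 0 < θ ∧
      ∀ s t : Fin (m + n) → ℝ,
        (∀ i, 0 ≤ s i) →
        (∑ i ∈ Finset.univ.filter (fun i : Fin (m + n) => (i : ℕ) < m), s i =
          ∑ i ∈ Finset.univ.filter (fun i : Fin (m + n) => m ≤ (i : ℕ)), s i) →
        (∀ i, i ∉ I₁ → s i = 0) →
        (∀ i, 0 ≤ t i) →
        (∑ i ∈ Finset.univ.filter (fun i : Fin (m + n) => (i : ℕ) < m), t i =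
          ∑ i ∈ Finset.univ.filter (fun i : Fin (m + n) => m ≤ (i : ℕ)), t i) →
        (∀ i, i ∉ I₂ → t i = 0) →
        (∃ i ∈ I₁, ∃ j ∈ I₁, (i : ℕ) < m ∧ m ≤ (j : ℕ) ∧
            θ * min (I₁.inf' (h₁.1.imp fun _ hi => hi.1) s)
                    (I₂.inf' (h₂.1.imp fun _ hi => hi.1) t)
              ≤ (s i + s j) - (t i + t j)) ∨
        (∃ i ∈ I₂, ∃ j ∈ I₂, (i : ℕ) < m ∧ m ≤ (j : ℕ) ∧
            θ * min (I₁.inf' (h₁.1.imp fun _ hi => hi.1) s)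
                    (I₂.inf' (h₂.1.imp fun _ hi => hi.1) t)
              ≤ (t i + t j) - (s i + s j)) := by
  have hθ : (0 : ℝ) < 1 / (m + n + 1) := by positivity
  refine ⟨1 / (m + n + 1), hθ, fun s t hs₀ hsbal hsI ht₀ htbal htJ => ?_⟩
  set μ := min (I₁.inf' (h₁.1.imp fun _ hi => hi.1) s) (I₂.inf' (h₂.1.imp fun _ hi => hi.1) t)
  have hμs : ∀ k ∈ I₁, μ ≤ s k := fun k hk => (min_le_left _ _).trans (inf'_le _ hk)
  have hμt : ∀ k ∈ I₂, μ ≤ t k := fun k hk => (min_le_right _ _).trans (inf'_le _ hk)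
  have hε : 0 ≤ 1 / (m + n + 1) * μ :=
    mul_nonneg hθ.le (le_min (le_inf' _ _ fun i _ => hs₀ i) (le_inf' _ _ fun i _ => ht₀ i))
  have hεμ : ((Fintype.card (Fin (m + n)) : ℝ) + 1) * (1 / (m + n + 1) * μ) = μ := by
    simp only [Fintype.card_fin, Nat.cast_add]
    field_simp
  have hLR : ∀ i : Fin (m + n), (i : ℕ) < m ∨ m ≤ (i : ℕ) := fun i => lt_or_ge _ _
  by_contra! h
  obtain ⟨k, hk⟩ := symmDiff_nonempty.2 hne
  rcases mem_symmDiff.1 hk with ⟨hk₁, hk₂⟩ | ⟨hk₂, hk₁⟩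
  · exact false_of_forall_mixing_lt ⟨hs₀, hsbal, hsI⟩ ⟨ht₀, htbal, htJ⟩ h₁ h₂ hLR hk₁ hk₂ hε
      (hεμ.trans_le (hμs k hk₁)) h.1 h.2
  · exact false_of_forall_mixing_lt ⟨ht₀, htbal, htJ⟩ ⟨hs₀, hsbal, hsI⟩ h₂ h₁ hLR hk₂ hk₁ hε
      (hεμ.trans_le (hμt k hk₂)) h.2 h.1

/-- Proposition about weights: for two distinct admissible subsets `I₁ ≠ I₂` of
`{1,…,m+n}` there is `θ > 0` such that for all `s ∈ A⁺_{I₁}` and `t ∈ A⁺_{I₂}`,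
some weight mixing for `I₁` satisfies `α(s-t) ≥ θ·min(⌊s⌋_{I₁}, ⌊t⌋_{I₂})`, or
some weight mixing for `I₂` satisfies `α(t-s) ≥ θ·min(⌊s⌋_{I₁}, ⌊t⌋_{I₂})`. -/
theorem weights_proposition (m n : ℕ) (hm : 1 ≤ m) (hn : 1 ≤ n)
    (I₁ I₂ : Finset (Fin (m + n)))
    (h₁ : (∃ i ∈ I₁, (i : ℕ) < m) ∧ (∃ j ∈ I₁, m ≤ (j : ℕ)))
    (h₂ : (∃ i ∈ I₂, (i : ℕ) < m) ∧ (∃ j ∈ I₂, m ≤ (j : ℕ)))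
    (hne : I₁ ≠ I₂) :
    ∃ θ : ℝ, 0 < θ ∧
      ∀ s t : Fin (m + n) → ℝ,
        (∀ i, 0 ≤ s i) →
        (∑ i ∈ Finset.univ.filter (fun i : Fin (m + n) => (i : ℕ) < m), s i =
          ∑ i ∈ Finset.univ.filter (fun i : Fin (m + n) => m ≤ (i : ℕ)), s i) →
        (∀ i, i ∉ I₁ → s i = 0) →
        (∀ i, 0 ≤ t i) →
        (∑ i ∈ Finset.univ.filter (fun i : Fin (m + n) => (i : ℕ) < m), t i =
          ∑ i ∈ Finset.univ.filter (fun i : Fin (m + n) => m ≤ (i : ℕ)), t i) →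
        (∀ i, i ∉ I₂ → t i = 0) →
        (∃ i ∈ I₁, ∃ j ∈ I₁, (i : ℕ) < m ∧ m ≤ (j : ℕ) ∧
            θ * min (I₁.inf' (h₁.1.imp fun _ hi => hi.1) s)
                    (I₂.inf' (h₂.1.imp fun _ hi => hi.1) t)
              ≤ (s i + s j) - (t i + t j)) ∨
        (∃ i ∈ I₂, ∃ j ∈ I₂, (i : ℕ) < m ∧ m ≤ (j : ℕ) ∧
            θ * min (I₁.inf' (h₁.1.imp fun _ hi => hi.1) s)
                    (I₂.inf' (h₂.1.imp fun _ hi => hi.1) t)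
              ≤ (t i + t j) - (s i + s j)) :=
  weights_proposition_general m n I₁ I₂ h₁ h₂ hne
end

section
/- Let d ≥ 1 and let ℓ be an integer with 2ℓ ≥ d + 1. Then there exists a constant c > 0 (depending only on d and ℓ) such that for every L > 0 and every C ≥ 1, ∫_{ℝ^d} max(1, ‖x‖)^{−2ℓ} · ω(π L x₁) dx ≤ c (C⁻¹ + C² L⁻²), where x₁ denotes the first coordinate of x. Consequently, taking C = L^{2/3}, there is a constant c′ > 0 such that for all L ≥ 1 the integral is at most c′ L^{−2/3}. -/
/-- The Fejér-type kernel `ω(t) = sin²(t)/t²` for `t ≠ 0`, `ω(0) = 1`. -/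
noncomputable def fejerKernel (t : ℝ) : ℝ :=
  if t = 0 then 1 else Real.sin t ^ 2 / t ^ 2

open MeasureTheory Set Real

/-! Because `‖·‖` is the sup norm, `max 1 ‖x‖ ^ (-2ℓ) ≤ ∏ᵢ max 1 |xᵢ| ^ (-p)` with
`p = (d + 1) / d > 1`, and `t ↦ max 1 |t| ^ (-p)` is integrable on `ℝ`; so by Fubini the
integral is a constant times a one-dimensional integral in `x₁`. There `ω(πLx₁) ≤ 1` on
`|x₁| ≤ C⁻¹`, which costs `2C⁻¹`, while `ω(πLx₁) ≤ (πLx₁)⁻² ≤ C²L⁻²` elsewhere. -/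

lemma fejerKernel_eq_sinc_sq : fejerKernel = fun t => sinc t ^ 2 := by
  funext t
  by_cases ht : t = 0
  · simp [fejerKernel, ht]
  · rw [fejerKernel, if_neg ht, sinc_of_ne_zero ht, div_pow]

lemma continuous_fejerKernel : Continuous fejerKernel := by
  rw [fejerKernel_eq_sinc_sq]
  fun_prop

lemma fejerKernel_nonneg (t : ℝ) : 0 ≤ fejerKernel t := by
  rw [fejerKernel_eq_sinc_sq]
  positivity

lemma fejerKernel_le_one (t : ℝ) : fejerKernel t ≤ 1 := by
  rw [fejerKernel_eq_sinc_sq]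
  exact (sq_le_one_iff_abs_le_one _).mpr (abs_sinc_le_one t)

lemma fejerKernel_le_inv_sq {t : ℝ} (ht : t ≠ 0) : fejerKernel t ≤ (t ^ 2)⁻¹ := by
  rw [fejerKernel, if_neg ht, div_eq_mul_inv]
  exact mul_le_of_le_one_left (by positivity) (sin_sq_le_one t)

lemma fejerKernel_pi_mul_le {L C t : ℝ} (hL : 0 < L) (hC : 0 < C) (ht : C⁻¹ < |t|) :
    fejerKernel (π * L * t) ≤ C ^ 2 * (L ^ 2)⁻¹ := by
  have hLt : L * C⁻¹ ≤ |π * L * t| := by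
    rw [abs_mul, abs_mul, abs_of_pos pi_pos, abs_of_pos hL, mul_assoc]
    have : L * C⁻¹ ≤ L * |t| := by gcongr
    nlinarith [pi_gt_three, mul_nonneg hL.le (abs_nonneg t)]
  have ht0 : t ≠ 0 := abs_pos.1 ((inv_pos.2 hC).trans ht)
  calc fejerKernel (π * L * t) ≤ ((π * L * t) ^ 2)⁻¹ :=
        fejerKernel_le_inv_sq (mul_ne_zero (mul_ne_zero pi_ne_zero hL.ne') ht0)
    _ ≤ ((L * C⁻¹) ^ 2)⁻¹ := by rw [← sq_abs (π * L * t)]; gcongr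
    _ = C ^ 2 * (L ^ 2)⁻¹ := by field_simp

lemma integrable_max_one_abs_rpow_neg {p : ℝ} (hp : 1 < p) :
    Integrable fun t : ℝ => max 1 |t| ^ (-p) := by
  have hdom : Integrable fun t : ℝ => (1 + ‖t‖) ^ (-p) / 2 ^ (-p) :=
    (integrable_one_add_norm (by simpa using hp)).div_const _
  refine hdom.mono' ((continuous_const.max continuous_abs).rpow_const
    fun _ => Or.inl (by positivity)).aestronglyMeasurable (Filter.Eventually.of_forall fun t => ?_)
  rw [Real.norm_of_nonneg (by positivity), ← div_rpow (by positivity) (by positivity),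
    Real.norm_eq_abs]
  exact rpow_le_rpow_of_nonpos (by positivity)
    (by linarith [le_max_left 1 |t|, le_max_right 1 |t|]) (by linarith)

lemma max_one_norm_rpow_neg_le_prod {ι : Type*} [Fintype ι] (x : ι → ℝ) {q : ℝ} (hq : 0 ≤ q) :
    max 1 ‖x‖ ^ (-(Fintype.card ι * q)) ≤ ∏ i, max 1 |x i| ^ (-q) := by
  have hprod : ∏ i, max 1 |x i| ≤ max 1 ‖x‖ ^ Fintype.card ι := by
    calc ∏ i, max 1 |x i| ≤ ∏ _i : ι, max 1 ‖x‖ :=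
          Finset.prod_le_prod (fun i _ => by positivity)
            (fun i _ => max_le_max_left 1 (by simpa using norm_le_pi_norm x i))
      _ = max 1 ‖x‖ ^ Fintype.card ι := by simp
  calc max 1 ‖x‖ ^ (-(Fintype.card ι * q)) = (max 1 ‖x‖ ^ Fintype.card ι) ^ (-q) := by
        rw [← rpow_natCast, ← rpow_mul (by positivity), mul_neg]
    _ ≤ (∏ i, max 1 |x i|) ^ (-q) :=
        rpow_le_rpow_of_nonpos (Finset.prod_pos fun i _ => by positivity) hprod (by linarith)
    _ = ∏ i, max 1 |x i| ^ (-q) := (finsetProd_rpow _ _ (fun i _ => by positivity) _).symm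

lemma max_one_norm_zpow_neg_le_prod {ι : Type*} [Fintype ι] [Nonempty ι] (x : ι → ℝ) {k : ℤ}
    (hk : Fintype.card ι + 1 ≤ k) :
    max 1 ‖x‖ ^ (-k) ≤ ∏ i, max 1 |x i| ^ (-((Fintype.card ι + 1) / Fintype.card ι : ℝ)) := by
  have hn : (0 : ℝ) < Fintype.card ι := by exact_mod_cast Fintype.card_pos
  have hexp : ((-k : ℤ) : ℝ) ≤ -(Fintype.card ι * ((Fintype.card ι + 1) / Fintype.card ι)) := by
    rw [mul_div_cancel₀ _ hn.ne']
    push_cast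
    linarith [show (Fintype.card ι + 1 : ℝ) ≤ k by exact_mod_cast hk]
  rw [← rpow_intCast]
  exact (rpow_le_rpow_of_exponent_le (le_max_left _ _) hexp).trans
    (max_one_norm_rpow_neg_le_prod x (by positivity))

lemma integral_mul_fejerKernel_le {g : ℝ → ℝ} (hg : Integrable g) (hg0 : ∀ t, 0 ≤ g t)
    (hg1 : ∀ t, g t ≤ 1) {L C : ℝ} (hL : 0 < L) (hC : 0 < C) :
    ∫ t, g t * fejerKernel (π * L * t) ≤ 2 * C⁻¹ + C ^ 2 * (L ^ 2)⁻¹ * ∫ t, g t := by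
  have hbound (t : ℝ) :
      g t * fejerKernel (π * L * t) ≤ (Icc (-C⁻¹) C⁻¹).indicator 1 t + C ^ 2 * (L ^ 2)⁻¹ * g t := by
    by_cases ht : |t| ≤ C⁻¹
    · rw [indicator_of_mem (mem_Icc.2 (abs_le.1 ht)), Pi.one_apply]
      have := mul_le_one₀ (hg1 t) (fejerKernel_nonneg (π * L * t)) (fejerKernel_le_one _)
      have : 0 ≤ C ^ 2 * (L ^ 2)⁻¹ * g t := mul_nonneg (by positivity) (hg0 t)
      linarith
    · have hout : t ∉ Icc (-C⁻¹) C⁻¹ := fun h => ht (abs_le.2 h)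
      rw [indicator_of_notMem hout, zero_add, mul_comm]
      exact mul_le_mul_of_nonneg_right (fejerKernel_pi_mul_le hL hC (not_le.1 ht)) (hg0 t)
  have hs : Integrable ((Icc (-C⁻¹) C⁻¹).indicator 1) :=
    (integrableOn_const (C := (1 : ℝ)) measure_Icc_lt_top.ne).integrable_indicator measurableSet_Icc
  calc ∫ t, g t * fejerKernel (π * L * t)
      ≤ ∫ t, (Icc (-C⁻¹) C⁻¹).indicator 1 t + C ^ 2 * (L ^ 2)⁻¹ * g t :=
        integral_mono_of_nonneg (ae_of_all _ fun t => mul_nonneg (hg0 t) (fejerKernel_nonneg _))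
          (hs.add (hg.const_mul _)) (ae_of_all _ hbound)
    _ = 2 * C⁻¹ + C ^ 2 * (L ^ 2)⁻¹ * ∫ t, g t := by
        rw [integral_add hs (hg.const_mul _), integral_indicator_one measurableSet_Icc,
          integral_const_mul, Real.volume_real_Icc]
        congr 1
        rw [max_eq_left (by linarith [inv_pos.2 hC])]
        ring

lemma integrable_prod_mul_fejerKernel {ι : Type*} [Fintype ι] {g : ℝ → ℝ} (hg : Integrable g)
    (i₀ : ι) (a : ℝ) :
    Integrable fun x : ι → ℝ => (∏ i, g (x i)) * fejerKernel (a * x i₀) :=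
  (Integrable.fintype_prod fun _ => hg).mul_bdd
    (continuous_fejerKernel.comp (continuous_const.mul (continuous_apply i₀))).aestronglyMeasurable
    (ae_of_all _ fun x => by
      rw [norm_of_nonneg (fejerKernel_nonneg _)]
      exact fejerKernel_le_one _)

lemma integral_prod_mul_fejerKernel_le {ι : Type*} [Fintype ι] {g : ℝ → ℝ}
    (hg : Integrable g) (hg0 : ∀ t, 0 ≤ g t) (hg1 : ∀ t, g t ≤ 1) (i₀ : ι) {L C : ℝ}
    (hL : 0 < L) (hC : 0 < C) :
    ∫ x : ι → ℝ, (∏ i, g (x i)) * fejerKernel (π * L * x i₀)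
      ≤ (2 * C⁻¹ + C ^ 2 * (L ^ 2)⁻¹ * ∫ t, g t) * (∫ t, g t) ^ (Fintype.card ι - 1) := by
  classical
  let H (i : ι) (t : ℝ) : ℝ := g t * if i = i₀ then fejerKernel (π * L * t) else 1
  have hH : ∀ x : ι → ℝ, (∏ i, g (x i)) * fejerKernel (π * L * x i₀) = ∏ i, H i (x i) := by
    intro x
    simp only [H, Finset.prod_mul_distrib, Finset.prod_ite_eq', Finset.mem_univ, if_true]
  have hH_off : ∀ i ∈ Finset.univ.erase i₀, ∫ t, H i t = ∫ t, g t := by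
    intro i hi
    simp [H, Finset.ne_of_mem_erase hi]
  simp_rw [hH]
  rw [integral_fintype_prod_volume_eq_prod, ← Finset.mul_prod_erase _ _ (Finset.mem_univ i₀),
    Finset.prod_congr rfl hH_off, Finset.prod_const, Finset.card_erase_of_mem (Finset.mem_univ _),
    Finset.card_univ]
  gcongr
  · exact pow_nonneg (integral_nonneg hg0) _
  · simpa [H] using integral_mul_fejerKernel_le hg hg0 hg1 hL hC

lemma exists_integral_max_one_norm_zpow_mul_fejerKernel_le {ι : Type*} [Fintype ι] (i₀ : ι)
    {k : ℤ} (hk : Fintype.card ι + 1 ≤ k) :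
    ∃ c : ℝ, 0 < c ∧ ∀ L : ℝ, 0 < L → ∀ C : ℝ, 1 ≤ C →
      ∫ x : ι → ℝ, max 1 ‖x‖ ^ (-k) * fejerKernel (π * L * x i₀)
        ≤ c * (C⁻¹ + C ^ 2 * (L ^ 2)⁻¹) := by
  have : Nonempty ι := ⟨i₀⟩
  set n := Fintype.card ι
  set p : ℝ := (n + 1) / n
  have hp : 1 < p := by
    rw [lt_div_iff₀ (by exact_mod_cast Fintype.card_pos)]
    linarith
  set g : ℝ → ℝ := fun t => max 1 |t| ^ (-p)
  have hg : Integrable g := integrable_max_one_abs_rpow_neg hp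
  have hg0 (t : ℝ) : 0 ≤ g t := by positivity
  have hg1 (t : ℝ) : g t ≤ 1 := rpow_le_one_of_one_le_of_nonpos (le_max_left _ _) (by linarith)
  set I := ∫ t, g t
  have hI : 0 ≤ I := integral_nonneg hg0
  refine ⟨2 * I ^ (n - 1) + I ^ n + 1, by positivity, fun L hL C hC => ?_⟩
  calc ∫ x : ι → ℝ, max 1 ‖x‖ ^ (-k) * fejerKernel (π * L * x i₀)
      ≤ ∫ x : ι → ℝ, (∏ i, g (x i)) * fejerKernel (π * L * x i₀) :=
        integral_mono_of_nonneg
          (ae_of_all _ fun x => mul_nonneg (by positivity) (fejerKernel_nonneg _))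
          (integrable_prod_mul_fejerKernel hg _ _)
          (ae_of_all _ fun x => mul_le_mul_of_nonneg_right
            (max_one_norm_zpow_neg_le_prod x hk) (fejerKernel_nonneg _))
    _ ≤ (2 * C⁻¹ + C ^ 2 * (L ^ 2)⁻¹ * I) * I ^ (n - 1) :=
        integral_prod_mul_fejerKernel_le hg hg0 hg1 _ hL (by linarith)
    _ ≤ (2 * I ^ (n - 1) + I ^ n + 1) * (C⁻¹ + C ^ 2 * (L ^ 2)⁻¹) := by
        have hC' : 0 ≤ C⁻¹ := by positivity
        have hq : 0 ≤ C ^ 2 * (L ^ 2)⁻¹ := by positivity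
        have hJ : 0 ≤ I ^ (n - 1) := pow_nonneg hI _
        have hIn : I ^ n = I ^ (n - 1) * I := by
          rw [← pow_succ, Nat.sub_add_cancel Fintype.card_pos]
        rw [hIn]
        nlinarith [mul_nonneg hJ hq, mul_nonneg (mul_nonneg hJ hI) hC']

lemma le_two_mul_rpow_neg_two_thirds {F : ℝ → ℝ} {c : ℝ}
    (hF : ∀ L, 0 < L → ∀ C, 1 ≤ C → F L ≤ c * (C⁻¹ + C ^ 2 * (L ^ 2)⁻¹)) {L : ℝ} (hL : 1 ≤ L) :
    F L ≤ 2 * c * L ^ (-(2 / 3) : ℝ) := by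
  have hL0 : 0 < L := one_pos.trans_le hL
  have hbalance :
      (L ^ (2 / 3 : ℝ))⁻¹ + (L ^ (2 / 3 : ℝ)) ^ 2 * (L ^ 2)⁻¹ = 2 * L ^ (-(2 / 3) : ℝ) := by
    rw [← rpow_neg hL0.le, ← rpow_natCast (L ^ (2 / 3 : ℝ)), ← rpow_mul hL0.le,
      ← rpow_natCast L 2, ← rpow_neg hL0.le, ← rpow_add hL0]
    norm_num
    ring
  calc F L ≤ c * ((L ^ (2 / 3 : ℝ))⁻¹ + (L ^ (2 / 3 : ℝ)) ^ 2 * (L ^ 2)⁻¹) :=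
        hF L hL0 _ (one_le_rpow hL (by norm_num))
    _ = 2 * c * L ^ (-(2 / 3) : ℝ) := by rw [hbalance]; ring

/-- Bound for the integral `∫_{ℝ^d} max(1,‖x‖)^{-2ℓ} ω(πLx₁) dx`
(with `‖·‖` the sup norm): it is `≤ c(C⁻¹ + C²L⁻²)` for all `C ≥ 1`, and
consequently `≤ c' L^{-2/3}` for `L ≥ 1`. -/
theorem fejer_integral_bound (d ℓ : ℕ) (hd : 1 ≤ d) (hℓ : d + 1 ≤ 2 * ℓ) :
    (∃ c : ℝ, 0 < c ∧ ∀ L : ℝ, 0 < L → ∀ C : ℝ, 1 ≤ C →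
      (∫ x : Fin d → ℝ,
          (max 1 ‖x‖) ^ (-(2 * ℓ : ℤ)) * fejerKernel (Real.pi * L * x ⟨0, hd⟩))
        ≤ c * (C⁻¹ + C ^ 2 * (L ^ 2)⁻¹)) ∧
    (∃ c' : ℝ, 0 < c' ∧ ∀ L : ℝ, 1 ≤ L →
      (∫ x : Fin d → ℝ,
          (max 1 ‖x‖) ^ (-(2 * ℓ : ℤ)) * fejerKernel (Real.pi * L * x ⟨0, hd⟩))
        ≤ c' * L ^ (-(2 / 3) : ℝ)) := by
  obtain ⟨c, hc, hbound⟩ := exists_integral_max_one_norm_zpow_mul_fejerKernel_le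
    (⟨0, hd⟩ : Fin d) (k := 2 * ℓ) (by rw [Fintype.card_fin]; exact_mod_cast hℓ)
  exact ⟨⟨c, hc, hbound⟩,
    ⟨2 * c, by positivity, fun L hL => le_two_mul_rpow_neg_two_thirds hbound hL⟩⟩
end

section
/- Let N ≥ 1, let s, t ∈ ℝ^N have nonnegative entries, and let I, J ⊆ {1, …, N}. Define s′ ∈ ℝ^N by s′_i = s_i for i ∈ I and s′_i = 0 for i ∉ I, and define t′ ∈ ℝ^N by t′_j = t_j for j ∈ J and t′_j = 0 for j ∉ J. Suppose there is β ∈ [0, 1) such that s_i ≤ β ‖s − t‖ for every i ∉ I and t_j ≤ β ‖s − t‖ for every j ∉ J. Then ‖s′ − t′‖ ≥ ‖s − t‖. -/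
/-!
Let `i` be a coordinate where `|s i - t i|` attains `D = ‖s - t‖ > 0`. For nonnegative reals
`|x - y| ≤ max x y`, so an entry that truncation may zero out, being at most `β D < D`, is the
smaller of `s i`, `t i`. Hence at most one of them is zeroed, and zeroing the smaller one does
not decrease `|s i - t i|`.
-/

lemma abs_sub_le_abs_ite_sub_ite {x y : ℝ} (hx : 0 ≤ x) (hy : 0 ≤ y) (p q : Prop)
    [Decidable p] [Decidable q] (hp : ¬p → x < |x - y|) (hq : ¬q → y < |x - y|) :
    |x - y| ≤ |(if p then x else 0) - (if q then y else 0)| := by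
  have hmax : |x - y| ≤ max x y :=
    abs_sub_le_of_nonneg_of_le hx (le_max_left x y) hy (le_max_right x y)
  by_cases hp' : p <;> by_cases hq' : q <;>
    simp only [hp', hq', if_true, if_false, sub_zero, zero_sub, abs_neg]
  · exact le_rfl
  · have hyx : y < x := (lt_max_iff.1 ((hq hq').trans_le hmax)).resolve_right (lt_irrefl y)
    rw [abs_of_nonneg hx]
    exact hmax.trans (max_le le_rfl hyx.le)
  · have hxy : x < y := (lt_max_iff.1 ((hp hp').trans_le hmax)).resolve_left (lt_irrefl x)
    rw [abs_of_nonneg hy]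
    exact hmax.trans (max_le hxy.le le_rfl)
  · exact absurd hmax (not_le.2 (max_lt (hp hp') (hq hq')))

lemma exists_norm_apply_eq_pi_norm {ι E : Type*} [Fintype ι] [SeminormedAddCommGroup E]
    (f : ι → E) (hf : 0 < ‖f‖) : ∃ i, ‖f i‖ = ‖f‖ := by
  by_contra! h
  exact lt_irrefl _ ((pi_norm_lt_iff hf).2 fun i => (norm_le_pi_norm f i).lt_of_ne (h i))

lemma pi_norm_sub_le_pi_norm_truncate_sub_truncate {ι : Type*} [Fintype ι] [DecidableEq ι]
    (s t : ι → ℝ) (hs : ∀ i, 0 ≤ s i) (ht : ∀ i, 0 ≤ t i) (I J : Finset ι)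
    (hsI : ∀ i, i ∉ I → s i < ‖s - t‖) (htJ : ∀ j, j ∉ J → t j < ‖s - t‖) :
    ‖s - t‖ ≤
      ‖(fun i => if i ∈ I then s i else 0) - (fun j => if j ∈ J then t j else 0)‖ := by
  rcases (norm_nonneg (s - t)).eq_or_lt with hzero | hpos
  · exact hzero ▸ norm_nonneg _
  obtain ⟨i, hi⟩ := exists_norm_apply_eq_pi_norm (s - t) hpos
  rw [Pi.sub_apply, Real.norm_eq_abs] at hi
  calc ‖s - t‖ = |s i - t i| := hi.symm
    _ ≤ |(if i ∈ I then s i else 0) - (if i ∈ J then t i else 0)| :=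
      abs_sub_le_abs_ite_sub_ite (hs i) (ht i) _ _
        (fun h => hi ▸ hsI i h) (fun h => hi ▸ htJ i h)
    _ ≤ _ := norm_le_pi_norm
      ((fun i => if i ∈ I then s i else 0) - (fun j => if j ∈ J then t j else 0)) i

theorem truncated_sup_distance_ge_general (N : ℕ) (s t : Fin N → ℝ)
    (hs : ∀ i, 0 ≤ s i) (ht : ∀ i, 0 ≤ t i)
    (I J : Finset (Fin N)) (β : ℝ) (hβ1 : β < 1)
    (hsI : ∀ i, i ∉ I → s i ≤ β * ‖s - t‖)
    (htJ : ∀ j, j ∉ J → t j ≤ β * ‖s - t‖) :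
    ‖s - t‖ ≤
      ‖(fun i => if i ∈ I then s i else 0) - (fun j => if j ∈ J then t j else 0)‖ := by
  rcases (norm_nonneg (s - t)).eq_or_lt with hzero | hpos
  · exact hzero ▸ norm_nonneg _
  have hβ : β * ‖s - t‖ < ‖s - t‖ := mul_lt_of_lt_one_left hpos hβ1
  exact pi_norm_sub_le_pi_norm_truncate_sub_truncate s t hs ht I J
    (fun i hi => (hsI i hi).trans_lt hβ) (fun j hj => (htJ j hj).trans_lt hβ)

/-- If the coordinates of `s` outside `I` and of `t` outside `J` are all at most
`β‖s-t‖` with `β < 1`, then truncating `s` to `I` and `t` to `J` does not decrease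
the sup-norm distance. -/
theorem truncated_sup_distance_ge (N : ℕ) (hN : 1 ≤ N) (s t : Fin N → ℝ)
    (hs : ∀ i, 0 ≤ s i) (ht : ∀ i, 0 ≤ t i)
    (I J : Finset (Fin N)) (β : ℝ) (hβ0 : 0 ≤ β) (hβ1 : β < 1)
    (hsI : ∀ i, i ∉ I → s i ≤ β * ‖s - t‖)
    (htJ : ∀ j, j ∉ J → t j ≤ β * ‖s - t‖) :
    ‖s - t‖ ≤
      ‖(fun i => if i ∈ I then s i else 0) - (fun j => if j ∈ J then t j else 0)‖ :=
  truncated_sup_distance_ge_general N s t hs ht I J β hβ1 hsI htJ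
end
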